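/- For every nonnegative integer n: qBinom(2n,n)/((-q;q)_n)² + ∑_{k=1}^{n} (-1)^k q^{k(k-1)} qBinom(2n, n-k)·(1+q^{2k})/((-q;q)_{n-k}·(-q;q)_{n+k}) equals 1 if n=0 and 0 otherwise, as rational functions in q. -/

import Mathlib

/-- Gaussian (q-)binomial coefficient, via the q-Pascal recurrence. -/
def qbinom {K : Type*} [CommRing K] (q : K) : ℕ → ℕ → K
  | _, 0 => 1
  | 0, _ + 1 => 0
  | n + 1, k + 1 => qbinom q n k + q ^ (k + 1) * qbinom q n (k + 1)

/-- q-Pochhammer symbol `(c;q)_r = ∏_{j=0}^{r-1} (1 - c·q^j)`. -/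
def qpoch {K : Type*} [CommRing K] (c q : K) (r : ℕ) : K :=
  ∏ j ∈ Finset.range r, (1 - c * q ^ j)

/-- The rational function field `ℚ(q)`. -/
noncomputable abbrev Kq : Type := RatFunc ℚ

/-- The variable `q` of `ℚ(q)`. -/
noncomputable def qv : Kq := RatFunc.X

open Finset

section Ring
variable {K : Type*} [CommRing K] (q : K)

lemma qpoch_succ (c : K) (r : ℕ) : qpoch c q (r+1) = qpoch c q r * (1 - c * q^r) :=
  Finset.prod_range_succ _ _

lemma qbinom_zero_right (n : ℕ) : qbinom q n 0 = 1 := by cases n <;> rfl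

lemma qbinom_succ_succ (n k : ℕ) :
    qbinom q (n+1) (k+1) = qbinom q n k + q ^ (k + 1) * qbinom q n (k + 1) := rfl

lemma qbinom_eq_zero : ∀ {n k : ℕ}, n < k → qbinom q n k = 0
  | 0, _+1, _ => rfl
  | n+1, k+1, h => by
      rw [qbinom_succ_succ, qbinom_eq_zero (by omega), qbinom_eq_zero (by omega)]; ring

lemma qbinom_self : ∀ n, qbinom q n n = 1
  | 0 => rfl
  | n+1 => by rw [qbinom_succ_succ, qbinom_self n, qbinom_eq_zero q (show n < n+1 by omega)]; ring

lemma qbinom_mul_qpoch : ∀ n k, k ≤ n →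
    qbinom q n k * (qpoch q q k * qpoch q q (n-k)) = qpoch q q n
  | 0, 0, _ => by simp [qbinom, qpoch]
  | n+1, 0, _ => by simp [qbinom_zero_right, qpoch]
  | n+1, k+1, h => by
    rcases eq_or_lt_of_le h with heq | hlt
    · obtain rfl : k = n := by omega
      simp [qbinom_self, qpoch]
    · have hk : k + 1 ≤ n := by omega
      have ih1 := qbinom_mul_qpoch n k (by omega)
      have ih2 := qbinom_mul_qpoch n (k+1) hk
      have e1 : n + 1 - (k+1) = n - k := by omega
      have e2 : n - k = (n - (k+1)) + 1 := by omega
      have hp : q^(k+1) * (q * q^(n-(k+1))) = q * q^n := by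
        rw [← pow_succ', ← pow_add, ← pow_succ']
        congr 1; omega
      rw [qbinom_succ_succ, e1, e2, qpoch_succ, qpoch_succ, qpoch_succ]
      rw [e2, qpoch_succ] at ih1
      rw [qpoch_succ] at ih2
      linear_combination (1 - q * q ^ k) * ih1
        + (q ^ (k+1) * (1 - q * q ^ (n - (k+1)))) * ih2 - qpoch q q n * hp

/-- The finite q-binomial theorem. -/
lemma qbt (m : ℕ) : ∀ x : K, ∑ k ∈ Finset.range (m+1),
      (-1 : K)^k * q^(k.choose 2) * x^k * qbinom q m k
    = ∏ i ∈ Finset.range m, (1 - x * q^i) := by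
  induction m with
  | zero => intro x; simp [qbinom]
  | succ m ih =>
    intro x
    rw [Finset.prod_range_succ']
    have h1 : ∏ i ∈ Finset.range m, (1 - x * q^(i+1))
        = ∑ k ∈ Finset.range (m+1), (-1 : K)^k * q^(k.choose 2) * (x*q)^k * qbinom q m k := by
      rw [ih (x*q)]
      exact Finset.prod_congr rfl fun i _ => by ring
    rw [h1, Finset.sum_range_succ' _ (m+1)]
    simp only [qbinom_succ_succ, qbinom_zero_right, pow_zero, one_mul, mul_one, pow_succ]
    rw [Finset.sum_mul]
    have hch : ∀ k : ℕ, (k+1).choose 2 = k.choose 2 + k := by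
      intro k
      have h2 := Nat.choose_succ_succ k 1
      norm_num [Nat.choose_one_right] at h2
      omega
    set h : ℕ → K := fun j => (-1:K)^j * q^(j.choose 2 + j) * x^j * qbinom q m j with hh
    have step : ∀ k ∈ Finset.range (m+1),
        (-1:K)^k * -1 * q^((k+1).choose 2) * (x^k * x) * (qbinom q m k + q^k * q * qbinom q m (k+1))
        = ((-1:K)^k * q^(k.choose 2) * (x*q)^k * qbinom q m k) * (1 - x) + (h (k+1) - h k) := by
      intro k _
      simp only [hh, hch, pow_succ, pow_add]
      ring
    rw [Finset.sum_congr rfl step, Finset.sum_add_distrib, Finset.sum_range_sub]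
    have hm1 : h (m+1) = 0 := by
      simp only [hh, qbinom_eq_zero q (show m < m + 1 by omega), mul_zero]
    have h0 : h 0 = 1 := by simp [hh, qbinom_zero_right]
    rw [hm1, h0]
    norm_num

end Ring

lemma qv_eq : qv = algebraMap (Polynomial ℚ) Kq Polynomial.X := (RatFunc.algebraMap_X).symm

lemma one_sub_qv_pow_ne (m : ℕ) (hm : m ≠ 0) : (1 : Kq) - qv ^ m ≠ 0 := by
  rw [qv_eq, ← map_pow, ← map_one (algebraMap (Polynomial ℚ) Kq), ← map_sub]
  apply RatFunc.algebraMap_ne_zero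
  intro h
  have := congrArg (Polynomial.eval 0) h
  simp [Polynomial.eval_pow, hm] at this

lemma one_add_qv_pow_ne (m : ℕ) (hm : m ≠ 0) : (1 : Kq) + qv ^ m ≠ 0 := by
  rw [qv_eq, ← map_pow, ← map_one (algebraMap (Polynomial ℚ) Kq), ← map_add]
  apply RatFunc.algebraMap_ne_zero
  intro h
  have := congrArg (Polynomial.eval 0) h
  simp [Polynomial.eval_pow, hm] at this

lemma qv_ne : (qv : Kq) ≠ 0 := RatFunc.X_ne_zero

lemma Pq_ne (r : ℕ) : qpoch qv qv r ≠ 0 := by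
  unfold qpoch
  rw [Finset.prod_ne_zero_iff]
  intro j _
  have : (1:Kq) - qv * qv ^ j = 1 - qv ^ (j+1) := by ring
  rw [this]
  exact one_sub_qv_pow_ne (j+1) (by omega)

lemma N_ne (r : ℕ) : qpoch (-1 * qv) qv r ≠ 0 := by
  unfold qpoch
  rw [Finset.prod_ne_zero_iff]
  intro j _
  have : (1:Kq) - (-1 * qv) * qv ^ j = 1 + qv ^ (j+1) := by ring
  rw [this]
  exact one_add_qv_pow_ne (j+1) (by omega)

lemma PQ_ne (r : ℕ) : qpoch (qv^2) (qv^2) r ≠ 0 := by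
  unfold qpoch
  rw [Finset.prod_ne_zero_iff]
  intro j _
  have : (1:Kq) - qv^2 * (qv^2) ^ j = 1 - qv ^ (2*j+2) := by rw [← pow_mul]; ring_nf
  rw [this]
  exact one_sub_qv_pow_ne (2*j+2) (by omega)

lemma Pq_mul_N (r : ℕ) : qpoch qv qv r * qpoch (-1 * qv) qv r = qpoch (qv^2) (qv^2) r := by
  unfold qpoch
  rw [← Finset.prod_mul_distrib]
  refine Finset.prod_congr rfl fun j _ => ?_
  rw [← pow_mul]
  ring_nf

/-- The summand of the symmetrized sum. -/
noncomputable def uu (n j : ℕ) : Kq :=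
  (-1)^(n+j) * qv ^ (((n:ℤ)-j)*((n:ℤ)-j-1)) * qbinom (qv^2) (2*n) j

lemma two_choose : ∀ j : ℕ, 2 * j.choose 2 = j * (j - 1)
  | 0 => rfl
  | (m+1) => by
    have ih := two_choose m
    have h2 := Nat.choose_succ_succ m 1
    norm_num [Nat.choose_one_right] at h2
    rw [h2, Nat.mul_add, ih, Nat.succ_sub_one]
    cases m with
    | zero => rfl
    | succ r => rw [Nat.succ_sub_one]; ring

lemma cast_sq (j : ℕ) : ((j * (j-1) : ℕ) : ℤ) = (j:ℤ) * ((j:ℤ) - 1) := by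
  cases j with
  | zero => simp
  | succ m => push_cast [Nat.succ_sub_one]; ring

lemma sum_u (n : ℕ) (hn : 1 ≤ n) : ∑ j ∈ Finset.range (2*n+1), uu n j = 0 := by
  have key := qbt (qv^2) (2*n) (qv ^ ((2:ℤ) - 2*n))
  have hx : ∀ j : ℕ, uu n j = ((-1:Kq)^n * qv ^ ((n:ℤ)*((n:ℤ)-1))) *
      ((-1)^j * (qv^2)^(j.choose 2) * (qv ^ ((2:ℤ) - 2*n))^j * qbinom (qv^2) (2*n) j) := by
    intro j
    unfold uu
    rw [pow_add]
    have e1 : ((qv:Kq)^2)^(j.choose 2) = qv ^ ((j:ℤ) * ((j:ℤ)-1)) := by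
      rw [← pow_mul, two_choose, ← zpow_natCast qv, cast_sq]
    have e2 : ((qv:Kq) ^ ((2:ℤ) - 2*n))^j = qv ^ (((2:ℤ) - 2*n) * j) := by
      rw [← zpow_natCast (qv ^ ((2:ℤ) - 2*n)), ← zpow_mul]
    have e3 : ((n:ℤ)-j)*((n:ℤ)-j-1) = (n:ℤ)*((n:ℤ)-1) + ((j:ℤ) * ((j:ℤ)-1) + ((2:ℤ) - 2*n) * j) := by
      ring
    rw [e1, e2, e3, zpow_add₀ qv_ne, zpow_add₀ qv_ne]
    ring
  calc ∑ j ∈ Finset.range (2*n+1), uu n j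
      = ((-1:Kq)^n * qv ^ ((n:ℤ)*((n:ℤ)-1))) * ∑ j ∈ Finset.range (2*n+1),
        ((-1)^j * (qv^2)^(j.choose 2) * (qv ^ ((2:ℤ) - 2*n))^j * qbinom (qv^2) (2*n) j) := by
        rw [Finset.mul_sum]; exact Finset.sum_congr rfl fun j _ => hx j
    _ = ((-1:Kq)^n * qv ^ ((n:ℤ)*((n:ℤ)-1))) * ∏ i ∈ Finset.range (2*n), (1 - qv ^ ((2:ℤ) - 2*n) * (qv^2)^i) := by rw [key]
    _ = 0 := by
        rw [Finset.prod_eq_zero (Finset.mem_range.mpr (show n-1 < 2*n by omega))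
          (show (1:Kq) - qv ^ ((2:ℤ) - 2*n) * (qv^2)^(n-1) = 0 from ?_), mul_zero]
        have : ((qv:Kq)^2)^(n-1) = qv ^ ((2:ℤ)*n - 2) := by
          rw [← pow_mul, ← zpow_natCast qv]
          congr 1
          push_cast [Nat.cast_sub hn]
          ring
        rw [this, ← zpow_add₀ qv_ne]
        norm_num

lemma split_sum (n : ℕ) (f : ℕ → Kq) :
    ∑ j ∈ Finset.range (2*n+1), f j
      = f n + ∑ k ∈ Finset.Icc 1 n, (f (n-k) + f (n+k)) := by
  rw [Finset.sum_add_distrib]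
  have h1 : ∑ k ∈ Finset.Icc 1 n, f (n-k) = ∑ j ∈ Finset.range n, f j := by
    apply Finset.sum_nbij' (fun k => n - k) (fun j => n - j)
    · intro a ha; simp only [Finset.mem_Icc] at ha; simp only [Finset.mem_range]; omega
    · intro a ha; simp only [Finset.mem_range] at ha; simp only [Finset.mem_Icc]; omega
    · intro a ha; simp only [Finset.mem_Icc] at ha; omega
    · intro a ha; simp only [Finset.mem_range] at ha; omega
    · intro a _; rfl
  have h2 : ∑ k ∈ Finset.Icc 1 n, f (n+k) = ∑ j ∈ Finset.Ico (n+1) (2*n+1), f j := by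
    apply Finset.sum_nbij' (fun k => n + k) (fun j => j - n)
    · intro a ha; simp only [Finset.mem_Icc] at ha; simp only [Finset.mem_Ico]; omega
    · intro a ha; simp only [Finset.mem_Ico] at ha; simp only [Finset.mem_Icc]; omega
    · intro a ha; simp only [Finset.mem_Icc] at ha; omega
    · intro a ha; simp only [Finset.mem_Ico] at ha; omega
    · intro a _; rfl
  rw [h1, h2]
  rw [Finset.range_eq_Ico, ← Finset.sum_Ico_consecutive f (show 0 ≤ n+1 by omega) (show n+1 ≤ 2*n+1 by omega)]
  rw [← Finset.range_eq_Ico, Finset.sum_range_succ]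
  ring

lemma neg_one_pow_congr_mod {a b : ℕ} (h : a % 2 = b % 2) : (-1 : Kq)^a = (-1)^b := by
  conv_lhs => rw [← Nat.div_add_mod a 2, pow_add, pow_mul, neg_one_sq, one_pow, one_mul]
  conv_rhs => rw [← Nat.div_add_mod b 2, pow_add, pow_mul, neg_one_sq, one_pow, one_mul]
  rw [h]

lemma qbinom_eq_div {r s : ℕ} (hs : s ≤ r) (q : Kq) (hq : ∀ t, qpoch q q t ≠ 0) :
    qbinom q r s = qpoch q q r / (qpoch q q s * qpoch q q (r - s)) := by
  rw [eq_div_iff (mul_ne_zero (hq s) (hq (r-s)))]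
  exact qbinom_mul_qpoch q r s hs

lemma term_eq (n k : ℕ) (hk1 : 1 ≤ k) (hkn : k ≤ n) :
    (-1 : Kq) ^ k * qv ^ (k * (k - 1)) * qbinom qv (2 * n) (n - k) * (1 + qv ^ (2 * k))
      / (qpoch (-1 * qv) qv (n - k) * qpoch (-1 * qv) qv (n + k))
    = (qpoch qv qv (2*n) / qpoch (qv^2) (qv^2) (2*n)) * (uu n (n-k) + uu n (n+k)) := by
  have e1 : uu n (n-k) = (-1)^k * qv^(k*(k-1)) * qbinom (qv^2) (2*n) (n-k) := by
    unfold uu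
    rw [neg_one_pow_congr_mod (show (n+(n-k)) % 2 = k % 2 by omega),
      show ((n:ℤ) - ((n-k:ℕ):ℤ)) = (k:ℤ) by omega, ← cast_sq, zpow_natCast]
  have e2 : uu n (n+k) = (-1)^k * qv^(k*(k-1)) * qv^(2*k) * qbinom (qv^2) (2*n) (n+k) := by
    unfold uu
    rw [neg_one_pow_congr_mod (show (n+(n+k)) % 2 = k % 2 by omega),
      show ((n:ℤ) - ((n+k:ℕ):ℤ)) * (((n:ℤ) - ((n+k:ℕ):ℤ)) - 1) = ((k*(k-1)+2*k : ℕ):ℤ) by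
        rw [Nat.cast_add (k*(k-1)) (2*k), cast_sq]; push_cast; ring,
      zpow_natCast, pow_add]
    ring
  have e3 : qbinom (qv^2) (2*n) (n+k) = qbinom (qv^2) (2*n) (n-k) := by
    rw [qbinom_eq_div (show n+k ≤ 2*n by omega) _ PQ_ne,
      qbinom_eq_div (show n-k ≤ 2*n by omega) _ PQ_ne,
      show 2*n - (n+k) = n-k by omega, show 2*n - (n-k) = n+k by omega]
    ring
  rw [e1, e2, e3,
    qbinom_eq_div (show n-k ≤ 2*n by omega) qv Pq_ne,
    qbinom_eq_div (show n-k ≤ 2*n by omega) _ PQ_ne,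
    show 2*n - (n-k) = n+k by omega,
    ← Pq_mul_N (n-k), ← Pq_mul_N (n+k), ← Pq_mul_N (2*n)]
  have h1 := Pq_ne (n-k); have h2 := Pq_ne (n+k); have h3 := Pq_ne (2*n)
  have h4 := N_ne (n-k); have h5 := N_ne (n+k); have h6 := N_ne (2*n)
  simp only [neg_one_mul] at h4 h5 h6 ⊢
  field_simp

lemma head_eq (n : ℕ) :
    qbinom qv (2 * n) n / (qpoch (-1 * qv) qv n) ^ 2
    = (qpoch qv qv (2*n) / qpoch (qv^2) (qv^2) (2*n)) * uu n n := by
  have e1 : uu n n = qbinom (qv^2) (2*n) n := by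
    unfold uu
    rw [neg_one_pow_congr_mod (show (n+n) % 2 = 0 % 2 by omega),
      show ((n:ℤ) - (n:ℤ)) * (((n:ℤ) - (n:ℤ)) - 1) = ((0:ℕ):ℤ) by ring]
    simp
  rw [e1,
    qbinom_eq_div (show n ≤ 2*n by omega) qv Pq_ne,
    qbinom_eq_div (show n ≤ 2*n by omega) _ PQ_ne,
    show 2*n - n = n by omega,
    ← Pq_mul_N n, ← Pq_mul_N (2*n)]
  have h1 := Pq_ne n; have h3 := Pq_ne (2*n)
  have h4 := N_ne n; have h6 := N_ne (2*n)
  simp only [neg_one_mul] at h4 h6 ⊢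
  field_simp

theorem super_catalan_stmt15 (n : ℕ) :
    qbinom qv (2 * n) n / (qpoch (-1 * qv) qv n) ^ 2
      + ∑ k ∈ Finset.Icc 1 n,
          (-1 : Kq) ^ k * qv ^ (k * (k - 1)) * qbinom qv (2 * n) (n - k) * (1 + qv ^ (2 * k))
            / (qpoch (-1 * qv) qv (n - k) * qpoch (-1 * qv) qv (n + k))
      = if n = 0 then 1 else 0 := by
  rcases Nat.eq_zero_or_pos n with rfl | hn
  · simp [qbinom, qpoch]
  · rw [if_neg (by omega)]
    calc qbinom qv (2 * n) n / (qpoch (-1 * qv) qv n) ^ 2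
      + ∑ k ∈ Finset.Icc 1 n,
          (-1 : Kq) ^ k * qv ^ (k * (k - 1)) * qbinom qv (2 * n) (n - k) * (1 + qv ^ (2 * k))
            / (qpoch (-1 * qv) qv (n - k) * qpoch (-1 * qv) qv (n + k))
        = (qpoch qv qv (2*n) / qpoch (qv^2) (qv^2) (2*n)) * uu n n
          + ∑ k ∈ Finset.Icc 1 n,
            (qpoch qv qv (2*n) / qpoch (qv^2) (qv^2) (2*n)) * (uu n (n-k) + uu n (n+k)) := by
          rw [head_eq]
          congr 1
          refine Finset.sum_congr rfl fun k hk => ?_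
          have hm := Finset.mem_Icc.mp hk
          exact term_eq n k hm.1 hm.2
      _ = (qpoch qv qv (2*n) / qpoch (qv^2) (qv^2) (2*n))
          * (uu n n + ∑ k ∈ Finset.Icc 1 n, (uu n (n-k) + uu n (n+k))) := by
          rw [mul_add, Finset.mul_sum]
      _ = (qpoch qv qv (2*n) / qpoch (qv^2) (qv^2) (2*n))
          * ∑ j ∈ Finset.range (2*n+1), uu n j := by rw [split_sum]
      _ = 0 := by rw [sum_u n hn, mul_zero]
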